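/- arXiv:2503.10815 — 2 statements merged into one kernel-verified Lean document; each statement's English description precedes it below -/
import Mathlib

section
/- Let X be a metric space and A, B nonempty compact subsets of X. Then sup { d(a,b) : (a,b) ∈ A × B, d(a,b) ≤ d_H(A,B) } = d_H(A,B); that is, the upper relational Hausdorff distance associated to the relation R_H(A,B) := { (a,b) ∈ A × B : d(a,b) ≤ d_H(A,B) } recovers the Hausdorff distance. -/
open Metric

/-- For nonempty compact sets `A`, `B`, the upper relational Hausdorff distance
associated to the relation `R_H(A,B) = {(a,b) ∈ A × B : d(a,b) ≤ d_H(A,B)}`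
recovers the Hausdorff distance:
`sup {d(a,b) : (a,b) ∈ A × B, d(a,b) ≤ d_H(A,B)} = d_H(A,B)`. -/
theorem sSup_RH_eq_hausdorffDist {X : Type*} [MetricSpace X]
    (A B : Set X) (hA : A.Nonempty) (hB : B.Nonempty)
    (hAc : IsCompact A) (hBc : IsCompact B) :
    sSup {r : ℝ | ∃ a ∈ A, ∃ b ∈ B,
        dist a b ≤ Metric.hausdorffDist A B ∧ r = dist a b} =
      Metric.hausdorffDist A B := by
  have hfin : EMetric.hausdorffEdist A B ≠ ⊤ :=
    hausdorffEdist_ne_top_of_nonempty_of_bounded hA hB hAc.isBounded hBc.isBounded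
  -- attain sup of infDist over A and B
  obtain ⟨a0, ha0, ha0max⟩ := hAc.exists_isMaxOn hA (continuous_infDist_pt B).continuousOn
  obtain ⟨b0, hb0, hb0max⟩ := hBc.exists_isMaxOn hB (continuous_infDist_pt A).continuousOn
  set M := max (infDist a0 B) (infDist b0 A) with hM
  have hle : hausdorffDist A B ≤ M := by
    apply hausdorffDist_le_of_infDist (le_trans infDist_nonneg (le_max_left _ _))
    · intro x hx; exact le_trans (ha0max hx) (le_max_left _ _)
    · intro x hx; exact le_trans (hb0max hx) (le_max_right _ _)
  have hge : M ≤ hausdorffDist A B := by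
    apply max_le
    · exact infDist_le_hausdorffDist_of_mem ha0 hfin
    · rw [hausdorffDist_comm]
      exact infDist_le_hausdorffDist_of_mem hb0 (by rwa [EMetric.hausdorffEdist_comm])
  have hMeq : hausdorffDist A B = M := le_antisymm hle hge
  -- find a pair attaining the hausdorff distance
  have hmem : ∃ a ∈ A, ∃ b ∈ B, dist a b = hausdorffDist A B := by
    rcases max_cases (infDist a0 B) (infDist b0 A) with ⟨h1, _⟩ | ⟨h1, _⟩
    · obtain ⟨b, hb, hd⟩ := hBc.exists_infDist_eq_dist hB a0
      exact ⟨a0, ha0, b, hb, by rw [hMeq, ← hd, hM, h1]⟩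
    · obtain ⟨a, ha, hd⟩ := hAc.exists_infDist_eq_dist hA b0
      exact ⟨a, ha, b0, hb0, by rw [hMeq, hM, h1, dist_comm, ← hd]⟩
  obtain ⟨a, ha, b, hb, hd⟩ := hmem
  apply le_antisymm
  · apply Real.sSup_le
    · rintro r ⟨a, _, b, _, hle', rfl⟩; exact hle'
    · exact hausdorffDist_nonneg
  · apply le_csSup
    · exact ⟨hausdorffDist A B, by rintro r ⟨a, _, b, _, hle', rfl⟩; exact hle'⟩
    · exact ⟨a, ha, b, hb, hd.le, hd.symm⟩
end

section
/- Let X be a metric space and let T denote the collection of ordered pairs (A,B) of nonempty bounded subsets of X. Let (R_i)_{i∈I} be a nonempty family where each R_i assigns to every (A,B) ∈ T a relation R_i(A,B) ⊆ A × B, and define d^i(A,B) := sSup { d(a,b) : (a,b) ∈ R_i(A,B) } (with sSup ∅ = 0). Assume: (directedness) for all i, j ∈ I there exists k ∈ I with R_k(A,B) ⊆ R_i(A,B) ∩ R_j(A,B) for all (A,B) ∈ T; and (triangle) for each i and all nonempty bounded A, B, C, d^i(A,B) ≤ d^i(A,C) + d^i(C,B). Then the collective upper relational distance d(A,B) :=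 inf_{i∈I} d^i(A,B) also satisfies the triangle inequality: d(A,B) ≤ d(A,C) + d(C,B) for all nonempty bounded A, B, C. -/
/-- The upper relational distance associated to a relation `R ⊆ X × X`:
`d^R := sSup {d(a,b) : (a,b) ∈ R}` (with `sSup ∅ = 0`). -/
noncomputable def upperRelDist {X : Type*} [MetricSpace X] (R : Set (X × X)) : ℝ :=
  sSup ((fun p : X × X => dist p.1 p.2) '' R)

section UpperRelDist

variable {X : Type*} [MetricSpace X]

lemma upperRelDist_nonneg (S : Set (X × X)) : 0 ≤ upperRelDist S :=
  Real.sSup_nonneg (by rintro _ ⟨p, _, rfl⟩; exact dist_nonneg)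

lemma bddAbove_dist_image_of_subset_prod {A B : Set X} {S : Set (X × X)}
    (hA : Bornology.IsBounded A) (hB : Bornology.IsBounded B) (hS : S ⊆ A ×ˢ B) :
    BddAbove ((fun p : X × X => dist p.1 p.2) '' S) := by
  obtain ⟨M, hM⟩ := Metric.isBounded_iff.mp (hA.union hB)
  refine ⟨M, ?_⟩
  rintro _ ⟨p, hp, rfl⟩
  exact hM (Or.inl (hS hp).1) (Or.inr (hS hp).2)

lemma upperRelDist_mono {S T : Set (X × X)} (hST : S ⊆ T)
    (hT : BddAbove ((fun p : X × X => dist p.1 p.2) '' T)) :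
    upperRelDist S ≤ upperRelDist T := by
  rcases S.eq_empty_or_nonempty with rfl | hS
  · simpa [upperRelDist] using upperRelDist_nonneg T
  · exact csSup_le_csSup hT (hS.image _) (Set.image_mono hST)

lemma upperRelDist_mono_of_subset_prod {A B : Set X} {S T : Set (X × X)}
    (hA : Bornology.IsBounded A) (hB : Bornology.IsBounded B) (hST : S ⊆ T) (hT : T ⊆ A ×ˢ B) :
    upperRelDist S ≤ upperRelDist T :=
  upperRelDist_mono hST (bddAbove_dist_image_of_subset_prod hA hB hT)

lemma ciInf_upperRelDist_le {I : Type*} (R : I → Set (X × X)) (i : I) :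
    ⨅ j, upperRelDist (R j) ≤ upperRelDist (R i) :=
  ciInf_le ⟨0, by rintro _ ⟨j, rfl⟩; exact upperRelDist_nonneg _⟩ i

end UpperRelDist

/-- If each member `d^i` of a directed family of upper relational distances satisfies the
triangle inequality, then so does the collective upper relational distance
`d(A,B) = ⨅ i, d^i(A,B)`. -/
theorem collectiveUpperRelDist_triangle {X : Type*} [MetricSpace X]
    {I : Type*} [Nonempty I]
    (R : I → Set X → Set X → Set (X × X))
    (hsub : ∀ (i : I) (A B : Set X), A.Nonempty → B.Nonempty →
      Bornology.IsBounded A → Bornology.IsBounded B → R i A B ⊆ A ×ˢ B)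
    (hdir : ∀ i j : I, ∃ k : I, ∀ (A B : Set X), A.Nonempty → B.Nonempty →
      Bornology.IsBounded A → Bornology.IsBounded B →
      R k A B ⊆ R i A B ∩ R j A B)
    (htri : ∀ (i : I) (A B C : Set X), A.Nonempty → B.Nonempty → C.Nonempty →
      Bornology.IsBounded A → Bornology.IsBounded B → Bornology.IsBounded C →
      upperRelDist (R i A B) ≤ upperRelDist (R i A C) + upperRelDist (R i C B)) :
    ∀ (A B C : Set X), A.Nonempty → B.Nonempty → C.Nonempty →
      Bornology.IsBounded A → Bornology.IsBounded B → Bornology.IsBounded C →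
      (⨅ i : I, upperRelDist (R i A B)) ≤
        (⨅ i : I, upperRelDist (R i A C)) + (⨅ i : I, upperRelDist (R i C B)) := by
  intro A B C hA hB hC hbA hbB hbC
  -- For any `i`, `j`, a common refinement `k` gives `d(A,B) ≤ d^k(A,B) ≤ d^i(A,C) + d^j(C,B)`.
  refine le_ciInf_add_ciInf fun i j => ?_
  obtain ⟨k, hk⟩ := hdir i j
  have hAC : upperRelDist (R k A C) ≤ upperRelDist (R i A C) :=
    upperRelDist_mono_of_subset_prod hbA hbC (fun _ hp => (hk A C hA hC hbA hbC hp).1)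
      (hsub i A C hA hC hbA hbC)
  have hCB : upperRelDist (R k C B) ≤ upperRelDist (R j C B) :=
    upperRelDist_mono_of_subset_prod hbC hbB (fun _ hp => (hk C B hC hB hbC hbB hp).2)
      (hsub j C B hC hB hbC hbB)
  calc ⨅ i, upperRelDist (R i A B) ≤ upperRelDist (R k A B) := ciInf_upperRelDist_le _ k
    _ ≤ upperRelDist (R k A C) + upperRelDist (R k C B) := htri k A B C hA hB hC hbA hbB hbC
    _ ≤ upperRelDist (R i A C) + upperRelDist (R j C B) := add_le_add hAC hCB
end
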